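/- arXiv:1105.2228 — 5 statements merged into one kernel-verified Lean document; each statement's English description precedes it below -/
import Mathlib

section
/- Let G be a directed graph with capacity assignment c on darts, and let f be a feasible flow. Then f is a maximum flow from the source set S to the sink set T if and only if there is no residual path from any node of S to any node of T in the residual graph G_f. -/
/-- A directed graph given by darts: each dart has a tail, a head, and a reverse dart. -/
structure Dgraph (V D : Type) where
  tail : D → V
  head : D → V
  rev : D → D
  rev_rev : ∀ d, rev (rev d) = d
  tail_rev : ∀ d, tail (rev d) = head d
  head_rev : ∀ d, head (rev d) = tail d

namespace Dgraph

variable {V D : Type}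

/-- an antisymmetric flow assignment -/
def Antisym (G : Dgraph V D) (f : D → ℝ) : Prop :=
  ∀ d, f (G.rev d) = - f d

/-- net inflow of a flow assignment at a node -/
noncomputable def inflow [Fintype D] [DecidableEq V] (G : Dgraph V D) (f : D → ℝ) (v : V) : ℝ :=
  ∑ d ∈ Finset.univ.filter (fun d => G.head d = v), f d

/-- one step along a dart of strictly positive capacity -/
def ResStep (G : Dgraph V D) (cap : D → ℝ) (u v : V) : Prop :=
  ∃ d, G.tail d = u ∧ G.head d = v ∧ 0 < cap d

/-- existence of a path all of whose darts have strictly positive capacity -/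
def ResReach (G : Dgraph V D) (cap : D → ℝ) (u v : V) : Prop :=
  Relation.ReflTransGen (G.ResStep cap) u v

/-- a pseudoflow: antisymmetric and respecting all capacities -/
def Pseudoflow (G : Dgraph V D) (c f : D → ℝ) : Prop :=
  G.Antisym f ∧ ∀ d, f d ≤ c d

end Dgraph

/-!
If a residual path leads from a source to a sink, pushing a small multiple of the unit flow along
it gives a feasible flow of larger value. Conversely, if no sink is residually reachable from the
sources, let `B` be the set of unreachable nodes. Antisymmetry cancels the flow on darts inside `B`,
so the value of every feasible flow is its net flow on the darts entering `B`. Each such dart is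
saturated by `f` and bounds every other pseudoflow by its capacity.
-/

open Finset Filter Topology

lemma exists_pos_mul_le {ι : Type*} [Finite ι] {g r : ι → ℝ} (hr : ∀ i, 0 ≤ r i)
    (h : ∀ i, 0 < g i → 0 < r i) : ∃ ε > 0, ∀ i, ε * g i ≤ r i := by
  have hev : ∀ i, ∀ᶠ ε in 𝓝[>] (0 : ℝ), ε * g i ≤ r i := by
    intro i
    rcases le_or_gt (g i) 0 with hg | hg
    · filter_upwards [self_mem_nhdsWithin] with ε hε
      exact (mul_nonpos_of_nonneg_of_nonpos (le_of_lt hε) hg).trans (hr i)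
    · have hlim : Tendsto (fun ε => ε * g i) (𝓝[>] 0) (𝓝 0) :=
        ((continuous_mul_const (g i)).tendsto' 0 0 (zero_mul _)).mono_left nhdsWithin_le_nhds
      exact (hlim.eventually_lt_const (h i hg)).mono fun _ => le_of_lt
  obtain ⟨ε, hε, hpos⟩ := ((eventually_all.2 hev).and self_mem_nhdsWithin).exists
  exact ⟨ε, hpos, hε⟩

namespace Dgraph

variable {V D : Type} (G : Dgraph V D)

lemma rev_eq_iff {d e : D} : G.rev e = d ↔ e = G.rev d :=
  ⟨fun h => h ▸ (G.rev_rev e).symm, fun h => h ▸ G.rev_rev d⟩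

variable {G}

lemma Antisym.add {f g : D → ℝ} (hf : G.Antisym f) (hg : G.Antisym g) : G.Antisym (f + g) :=
  fun d => by simp only [Pi.add_apply, hf d, hg d, neg_add]

lemma Antisym.smul {g : D → ℝ} (hg : G.Antisym g) (a : ℝ) : G.Antisym (a • g) :=
  fun d => by simp only [Pi.smul_apply, smul_eq_mul, hg d, mul_neg]

lemma Antisym.sum_eq_zero [Fintype D] {g : D → ℝ} (hg : G.Antisym g) : ∑ d, g d = 0 := by
  have h : ∑ d, g (G.rev d) = ∑ d, g d :=
    Equiv.sum_comp (Function.Involutive.toPerm G.rev G.rev_rev) g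
  rw [sum_congr rfl fun d _ => hg d, sum_neg_distrib] at h
  linarith

variable (G)

noncomputable def dartFlow [DecidableEq D] (d : D) : D → ℝ :=
  Pi.single d 1 - Pi.single (G.rev d) 1

lemma antisym_dartFlow [DecidableEq D] (d : D) : G.Antisym (G.dartFlow d) := by
  intro e
  simp only [dartFlow, Pi.sub_apply, Pi.single_apply, G.rev_eq_iff, G.rev_rev]
  ring

lemma dartFlow_apply_nonpos [DecidableEq D] {d e : D} (h : e ≠ d) : G.dartFlow d e ≤ 0 := by
  simp only [dartFlow, Pi.sub_apply, Pi.single_apply, h, if_false]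
  split_ifs <;> norm_num

section flows

variable [Fintype D] [DecidableEq V]

lemma inflow_add (f g : D → ℝ) (v : V) : G.inflow (f + g) v = G.inflow f v + G.inflow g v :=
  sum_add_distrib

lemma inflow_smul (a : ℝ) (g : D → ℝ) (v : V) : G.inflow (a • g) v = a * G.inflow g v :=
  (mul_sum _ _ _).symm

lemma inflow_dartFlow [DecidableEq D] (d : D) (v : V) :
    G.inflow (G.dartFlow d) v =
      (if v = G.head d then 1 else 0) - (if v = G.tail d then 1 else 0) := by
  simp [inflow, dartFlow, sum_sub_distrib, sum_pi_single', G.head_rev, eq_comm]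

lemma exists_unitFlow_of_resReach {r : D → ℝ} {s t : V} (h : G.ResReach r s t) :
    ∃ g : D → ℝ, G.Antisym g ∧
      (∀ v, G.inflow g v = (if v = t then 1 else 0) - (if v = s then 1 else 0)) ∧
      ∀ d, 0 < g d → 0 < r d := by
  classical
  induction h using Relation.ReflTransGen.head_induction_on with
  | refl =>
    exact ⟨0, fun _ => by simp, fun _ => by simp [inflow], fun _ h => (lt_irrefl 0 h).elim⟩
  | head hstep _ ih =>
    obtain ⟨d, rfl, rfl, hd⟩ := hstep
    obtain ⟨g, hg, hginflow, hgpos⟩ := ih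
    refine ⟨g + G.dartFlow d, hg.add (G.antisym_dartFlow d), fun v => ?_, fun e he => ?_⟩
    · rw [inflow_add, hginflow, inflow_dartFlow]
      ring
    · by_cases hed : e = d
      · exact hed ▸ hd
      · have := G.dartFlow_apply_nonpos hed
        exact hgpos e (by simp only [Pi.add_apply] at he; linarith)

def cutIn (B : Finset V) : Finset D :=
  univ.filter fun d => G.head d ∈ B ∧ G.tail d ∉ B

lemma sum_inflow_eq_sum_cutIn {g : D → ℝ} (hg : G.Antisym g) (B : Finset V) :
    ∑ v ∈ B, G.inflow g v = ∑ d ∈ G.cutIn B, g d := by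
  have hinner : ∑ d, (if G.head d ∈ B ∧ G.tail d ∈ B then g d else 0) = 0 := by
    refine Antisym.sum_eq_zero (G := G) fun d => ?_
    simp only [G.head_rev, G.tail_rev, and_comm (a := G.tail d ∈ B), hg d]
    split_ifs <;> simp
  calc ∑ v ∈ B, G.inflow g v = ∑ d, if G.head d ∈ B then g d else 0 := by
        simp only [inflow, sum_filter]
        rw [sum_comm]
        simp only [sum_ite_eq]
    _ = ∑ d, ((if G.head d ∈ B ∧ G.tail d ∉ B then g d else 0) +
          if G.head d ∈ B ∧ G.tail d ∈ B then g d else 0) := by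
        refine sum_congr rfl fun d _ => ?_
        split_ifs <;> simp_all
    _ = ∑ d ∈ G.cutIn B, g d := by
        rw [sum_add_distrib, hinner, add_zero, cutIn, sum_filter]

lemma sum_inflow_eq_sum_cutIn_of_subset {g : D → ℝ} (hg : G.Antisym g) {S T B : Finset V}
    (hcons : ∀ v, v ∉ S → v ∉ T → G.inflow g v = 0) (hTB : T ⊆ B) (hSB : Disjoint S B) :
    ∑ t ∈ T, G.inflow g t = ∑ d ∈ G.cutIn B, g d := by
  rw [← G.sum_inflow_eq_sum_cutIn hg B]
  exact sum_subset hTB fun v hvB hvT => hcons v (disjoint_right.1 hSB hvB) hvT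

variable {c f : D → ℝ} {S T : Finset V}

theorem exists_value_lt_of_resReach (hST : Disjoint S T) (hf : G.Pseudoflow c f)
    (hcons : ∀ v, v ∉ S → v ∉ T → G.inflow f v = 0) {s t : V} (hs : s ∈ S) (ht : t ∈ T)
    (hreach : G.ResReach (fun d => c d - f d) s t) :
    ∃ f' : D → ℝ, G.Pseudoflow c f' ∧ (∀ v, v ∉ S → v ∉ T → G.inflow f' v = 0) ∧
      ∑ t ∈ T, G.inflow f t < ∑ t ∈ T, G.inflow f' t := by
  obtain ⟨g, hg, hginflow, hgpos⟩ := G.exists_unitFlow_of_resReach hreach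
  obtain ⟨ε, hε, hεg⟩ := exists_pos_mul_le (fun d => sub_nonneg.2 (hf.2 d)) hgpos
  have hinflow : ∀ v, G.inflow (f + ε • g) v =
      G.inflow f v + ε * ((if v = t then 1 else 0) - (if v = s then 1 else 0)) := fun v => by
    rw [inflow_add, inflow_smul, hginflow]
  refine ⟨f + ε • g, ⟨hf.1.add (hg.smul ε), fun d => ?_⟩, fun v hvS hvT => ?_, ?_⟩
  · simpa only [Pi.add_apply, Pi.smul_apply, smul_eq_mul, le_sub_iff_add_le'] using hεg d
  · rw [hinflow, hcons v hvS hvT, if_neg (ne_of_mem_of_not_mem ht hvT).symm,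
      if_neg (ne_of_mem_of_not_mem hs hvS).symm]
    ring
  · have hsT : s ∉ T := disjoint_left.1 hST hs
    simp only [hinflow, sum_add_distrib, ← mul_sum, sum_sub_distrib, sum_ite_eq', if_pos ht,
      if_neg hsT]
    linarith

theorem value_le_of_not_resReach (hf : G.Pseudoflow c f)
    (hcons : ∀ v, v ∉ S → v ∉ T → G.inflow f v = 0)
    (hpath : ¬ ∃ s ∈ S, ∃ t ∈ T, G.ResReach (fun d => c d - f d) s t) {f' : D → ℝ}
    (hf' : G.Pseudoflow c f') (hcons' : ∀ v, v ∉ S → v ∉ T → G.inflow f' v = 0) :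
    ∑ t ∈ T, G.inflow f' t ≤ ∑ t ∈ T, G.inflow f t := by
  classical
  let Reach : V → Prop := fun v => ∃ s ∈ S, G.ResReach (fun d => c d - f d) s v
  -- the unreachable nodes, cut down to a finite set: heads (every tail is one) and sinks
  let B : Finset V := (univ.image G.head ∪ T).filter fun v => ¬ Reach v
  have hTB : T ⊆ B := fun t ht =>
    mem_filter.2 ⟨mem_union_right _ ht, fun ⟨s, hs, h⟩ => hpath ⟨s, hs, t, ht, h⟩⟩
  have hSB : Disjoint S B :=
    disjoint_left.2 fun s hs hsB => (mem_filter.1 hsB).2 ⟨s, hs, .refl⟩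
  have hsaturated : ∀ d ∈ G.cutIn B, c d ≤ f d := by
    intro d hd
    obtain ⟨hhead, htail⟩ := (mem_filter.1 hd).2
    have htail_reach : Reach (G.tail d) := by
      by_contra h
      exact htail <| mem_filter.2
        ⟨mem_union_left _ (mem_image.2 ⟨G.rev d, mem_univ _, G.head_rev d⟩), h⟩
    obtain ⟨s, hs, hsd⟩ := htail_reach
    by_contra hlt
    exact (mem_filter.1 hhead).2 ⟨s, hs, hsd.tail ⟨d, rfl, rfl, sub_pos.2 (not_le.1 hlt)⟩⟩
  rw [G.sum_inflow_eq_sum_cutIn_of_subset hf'.1 hcons' hTB hSB,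
    G.sum_inflow_eq_sum_cutIn_of_subset hf.1 hcons hTB hSB]
  exact sum_le_sum fun d hd => (hf'.2 d).trans (hsaturated d hd)

end flows

end Dgraph

open Dgraph in
/-- a feasible flow is maximum iff there is no residual source-to-sink path. -/
theorem stmt0 {V D : Type} [Fintype D] [DecidableEq V]
    (G : Dgraph V D) (c : D → ℝ) (S T : Finset V) (hST : Disjoint S T)
    (f : D → ℝ) (hf : G.Pseudoflow c f)
    (hcons : ∀ v, v ∉ S → v ∉ T → G.inflow f v = 0) :
    (∀ f' : D → ℝ, G.Pseudoflow c f' →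
        (∀ v, v ∉ S → v ∉ T → G.inflow f' v = 0) →
        ∑ t ∈ T, G.inflow f' t ≤ ∑ t ∈ T, G.inflow f t)
      ↔ ¬ ∃ s ∈ S, ∃ t ∈ T, G.ResReach (fun d => c d - f d) s t := by
  constructor
  · rintro hmax ⟨s, hs, t, ht, hreach⟩
    obtain ⟨f', hf', hcons', hlt⟩ := G.exists_value_lt_of_resReach hST hf hcons hs ht hreach
    exact (hmax f' hf' hcons').not_gt hlt
  · exact fun hpath f' hf' hcons' => G.value_le_of_not_resReach hf hcons hpath hf' hcons'
end

section
/- Let ρ be a feasible circulation in the residual graph G (i.e., a pseudoflow with respect to the capacities of G obeying conservation at every node). For any two nodes u and v, if there is no residual u-to-v path in G, then there is no residual u-to-v path in G_ρ (the residual graph after pushing ρ). -/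
/-!
Let `S` be the set of nodes residually reachable from `u` in `G`. Every dart leaving `S` has
capacity `≤ 0`, so a feasible `ρ` is `≤ 0` on it; but conservation and antisymmetry make the
net flow of `ρ` across the cut zero, so `ρ` vanishes on every dart leaving `S`. Hence these
darts keep capacity `≤ 0` in `G_ρ`, and `S` is still closed under residual steps there.
-/

namespace Dgraph

open Finset

variable {V D : Type} (G : Dgraph V D)

theorem cap_nonpos_of_leaving_resReach {c : D → ℝ} {u : V} {d : D}
    (ht : G.ResReach c u (G.tail d)) (hh : ¬ G.ResReach c u (G.head d)) : c d ≤ 0 :=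
  not_lt.mp fun hc => hh (ht.tail ⟨d, rfl, rfl, hc⟩)

variable [Fintype D] {f : D → ℝ}

theorem sum_head_mem_eq_zero [DecidableEq V] (hcons : ∀ v, G.inflow f v = 0)
    (P : V → Prop) [DecidablePred P] :
    ∑ d ∈ univ.filter (fun d => P (G.head d)), f d = 0 := by
  set s := univ.filter (fun d => P (G.head d))
  rw [← sum_fiberwise_of_maps_to (t := s.image G.head) (fun d hd => mem_image_of_mem _ hd) f]
  refine sum_eq_zero fun w hw => ?_
  obtain ⟨d₀, hd₀, rfl⟩ := mem_image.mp hw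
  have hfiber : s.filter (fun d => G.head d = G.head d₀)
      = univ.filter (fun d => G.head d = G.head d₀) := by
    ext d
    simp only [s, mem_filter, mem_univ, true_and, and_iff_right_iff_imp]
    exact fun hd => hd ▸ (mem_filter.mp hd₀).2
  rw [hfiber]
  exact hcons _

theorem sum_head_mem_tail_mem_eq_zero (hf : G.Antisym f) (P : V → Prop) [DecidablePred P] :
    ∑ d ∈ univ.filter (fun d => P (G.head d) ∧ P (G.tail d)), f d = 0 := by
  refine sum_involution (fun d _ => G.rev d) (fun d _ => by rw [hf d]; ring)
    (fun d _ hne hrev => hne ?_) (fun d hd => ?_) (fun d _ => G.rev_rev d)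
  · have := hf d
    rw [hrev] at this
    linarith
  · simp only [mem_filter, mem_univ, true_and, G.head_rev, G.tail_rev] at hd ⊢
    exact hd.symm

theorem sum_head_mem_tail_not_mem_eq_zero [DecidableEq V] (hf : G.Antisym f)
    (hcons : ∀ v, G.inflow f v = 0) (P : V → Prop) [DecidablePred P] :
    ∑ d ∈ univ.filter (fun d => P (G.head d) ∧ ¬ P (G.tail d)), f d = 0 := by
  have hsplit := sum_filter_add_sum_filter_not (univ.filter (fun d => P (G.head d)))
    (fun d => P (G.tail d)) f
  rw [filter_filter, filter_filter, G.sum_head_mem_tail_mem_eq_zero hf,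
    G.sum_head_mem_eq_zero hcons] at hsplit
  linarith

theorem Pseudoflow.eq_zero_of_leaving_resReach [DecidableEq V] {c ρ : D → ℝ}
    (hρ : G.Pseudoflow c ρ) (hcons : ∀ v, G.inflow ρ v = 0) {u : V} {d : D}
    (ht : G.ResReach c u (G.tail d)) (hh : ¬ G.ResReach c u (G.head d)) : ρ d = 0 := by
  classical
  have hle : ∀ e ∈ univ.filter (fun e => ¬ G.ResReach c u (G.head e) ∧
      ¬ ¬ G.ResReach c u (G.tail e)), ρ e ≤ 0 := by
    intro e he
    simp only [mem_filter, mem_univ, true_and, not_not] at he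
    exact (hρ.2 e).trans (G.cap_nonpos_of_leaving_resReach he.2 he.1)
  refine (sum_eq_zero_iff_of_nonpos hle).mp ?_ d (by simp [ht, hh])
  exact G.sum_head_mem_tail_not_mem_eq_zero hρ.1 hcons (fun w => ¬ G.ResReach c u w)

theorem resReach_of_resReach_sub_pseudoflow [DecidableEq V] {c ρ : D → ℝ}
    (hρ : G.Pseudoflow c ρ) (hcons : ∀ v, G.inflow ρ v = 0) {u w : V}
    (hw : G.ResReach (fun d => c d - ρ d) u w) : G.ResReach c u w := by
  induction hw with
  | refl => exact .refl
  | tail _ hstep ih =>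
    obtain ⟨d, rfl, rfl, hpos⟩ := hstep
    by_contra hh
    have hρd := hρ.eq_zero_of_leaving_resReach G hcons ih hh
    have hcd := G.cap_nonpos_of_leaving_resReach ih hh
    simp only at hpos
    linarith

end Dgraph

/-- pushing a feasible circulation does not create new residual connections. -/
theorem stmt1 {V D : Type} [Fintype D] [DecidableEq V]
    (G : Dgraph V D) (c ρ : D → ℝ)
    (hρ : G.Pseudoflow c ρ) (hcons : ∀ v, G.inflow ρ v = 0)
    (u v : V) (h : ¬ G.ResReach c u v) :
    ¬ G.ResReach (fun d => c d - ρ d) u v :=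
  fun hreach => h (G.resReach_of_resReach_sub_pseudoflow hρ hcons hreach)
end

section
/- (Sources lemma) Let f be a feasible flow in G whose source set is X (i.e., f obeys conservation at every node not in X ∪ (sinks of f), and every node with positive outflow lies in X) and which respects the capacities of G. Let A and B be two disjoint sets of nodes. If there is no residual path from A ∪ X to B in G, then there is no residual path from A to B in the residual graph G_f. -/
/-!
Let `R` be the set of nodes reachable from `A ∪ X` along darts of positive capacity. A dart
leaving `R` has `c ≤ 0`, hence `f ≤ 0`. If one of them had positive residual capacity it would
carry strictly negative flow, so the net inflow into the complement of `R`, which by antisymmetry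
is the flow on the darts entering it, would be negative. But the complement contains no source,
so every node in it has nonnegative inflow. Hence `R` is closed in `G_f` too; it contains `A`
and misses `B`.
-/

namespace Dgraph

variable {V D : Type} (G : Dgraph V D) {f : D → ℝ}

theorem sum_eq_zero_of_antisym (hf : G.Antisym f) {s : Finset D}
    (hs : ∀ d ∈ s, G.rev d ∈ s) : ∑ d ∈ s, f d = 0 :=
  Finset.sum_involution (fun d _ => G.rev d) (fun d _ => by rw [hf]; ring)
    (fun d _ hfd hd => hfd (by linarith [hd ▸ hf d])) hs (fun d _ => G.rev_rev d)

theorem sum_head_mem_eq_sum_entering [Fintype D] (hf : G.Antisym f) (S : Set V)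
    [DecidablePred (· ∈ S)] :
    ∑ d ∈ Finset.univ.filter (fun d => G.head d ∈ S), f d
      = ∑ d ∈ Finset.univ.filter (fun d => G.head d ∈ S ∧ G.tail d ∉ S), f d := by
  rw [← Finset.sum_filter_add_sum_filter_not _ (fun d => G.tail d ∈ S), Finset.filter_filter,
    Finset.filter_filter, G.sum_eq_zero_of_antisym hf, zero_add]
  intro d hd
  simp only [Finset.mem_filter, Finset.mem_univ, true_and, G.head_rev, G.tail_rev] at hd ⊢
  exact hd.symm

theorem sum_head_mem_nonneg [Fintype D] [DecidableEq V] (S : Set V) [DecidablePred (· ∈ S)]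
    (hS : ∀ v ∈ S, 0 ≤ G.inflow f v) :
    0 ≤ ∑ d ∈ Finset.univ.filter (fun d => G.head d ∈ S), f d := by
  set s := Finset.univ.filter (fun d => G.head d ∈ S)
  rw [← Finset.sum_fiberwise_of_maps_to (fun d hd => Finset.mem_image_of_mem G.head hd)]
  refine Finset.sum_nonneg fun v hv => ?_
  obtain ⟨d, hd, rfl⟩ := Finset.mem_image.mp hv
  have hfiber : s.filter (fun d' => G.head d' = G.head d)
      = Finset.univ.filter (fun d' => G.head d' = G.head d) := by
    ext d'
    simp only [s, Finset.mem_filter, Finset.mem_univ, true_and, and_iff_right_iff_imp]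
    exact fun h => h ▸ (Finset.mem_filter.mp hd).2
  rw [hfiber]
  exact hS _ (Finset.mem_filter.mp hd).2

theorem mem_of_resStep_residual [Fintype D] [DecidableEq V] {c : D → ℝ} (hanti : G.Antisym f)
    (hcap : ∀ d, f d ≤ c d) {R : Set V} (hR : ∀ d, G.tail d ∈ R → 0 < c d → G.head d ∈ R)
    (hsrc : ∀ v, G.inflow f v < 0 → v ∈ R) {u v : V} (hu : u ∈ R)
    (huv : G.ResStep (fun d => c d - f d) u v) : v ∈ R := by
  classical
  obtain ⟨d₀, rfl, rfl, hd₀⟩ := huv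
  by_contra hv
  have hleaving : ∀ d, G.tail d ∈ R → G.head d ∉ R → c d ≤ 0 :=
    fun d ht hh => not_lt.mp fun hc => hh (hR d ht hc)
  have hentering :
      ∑ d ∈ Finset.univ.filter (fun d => G.head d ∈ Rᶜ ∧ G.tail d ∉ Rᶜ), f d < 0 := by
    refine Finset.sum_neg' (fun d hd => ?_) ⟨d₀, ?_, ?_⟩
    · simp only [Finset.mem_filter, Set.mem_compl_iff, not_not] at hd
      exact (hcap d).trans (hleaving d hd.2.2 hd.2.1)
    · simpa using ⟨hv, hu⟩
    · linarith [hleaving d₀ hu hv, show 0 < c d₀ - f d₀ from hd₀]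
  have hnonneg := G.sum_head_mem_nonneg Rᶜ fun v hv => not_lt.mp (hv ∘ hsrc v)
  rw [G.sum_head_mem_eq_sum_entering hanti Rᶜ] at hnonneg
  linarith

theorem mem_of_resReach {cap : D → ℝ} {R : Set V}
    (hR : ∀ u v, u ∈ R → G.ResStep cap u v → v ∈ R) {u v : V} (hu : u ∈ R)
    (huv : G.ResReach cap u v) : v ∈ R := by
  induction huv with
  | refl => exact hu
  | tail _ hstep ih => exact hR _ _ ih hstep

end Dgraph

theorem stmt2_general {V D : Type} [Fintype D] [DecidableEq V]
    (G : Dgraph V D) (c f : D → ℝ) (X A B : Set V)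
    (hanti : G.Antisym f) (hcap : ∀ d, f d ≤ c d)
    (hsrc : ∀ v, G.inflow f v < 0 → v ∈ X)
    (h : ¬ ∃ a ∈ A ∪ X, ∃ b ∈ B, G.ResReach c a b) :
    ¬ ∃ a ∈ A, ∃ b ∈ B, G.ResReach (fun d => c d - f d) a b := by
  rintro ⟨a, ha, b, hb, hab⟩
  let R : Set V := {v | ∃ x ∈ A ∪ X, G.ResReach c x v}
  have hR : ∀ d, G.tail d ∈ R → 0 < c d → G.head d ∈ R :=
    fun d ⟨x, hx, hxd⟩ hd => ⟨x, hx, hxd.tail ⟨d, rfl, rfl, hd⟩⟩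
  have hsrcR : ∀ v, G.inflow f v < 0 → v ∈ R :=
    fun v hv => ⟨v, Or.inr (hsrc v hv), .refl⟩
  obtain ⟨x, hx, hxb⟩ := G.mem_of_resReach
    (fun _ _ hu => G.mem_of_resStep_residual hanti hcap hR hsrcR hu) ⟨a, Or.inl ha, .refl⟩ hab
  exact h ⟨x, hx, b, hb, hxb⟩

/-- sources lemma. -/
theorem stmt2 {V D : Type} [Fintype D] [DecidableEq V]
    (G : Dgraph V D) (c f : D → ℝ) (X A B : Set V)
    (hanti : G.Antisym f) (hcap : ∀ d, f d ≤ c d)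
    (hsrc : ∀ v, G.inflow f v < 0 → v ∈ X)
    (hAB : Disjoint A B)
    (h : ¬ ∃ a ∈ A ∪ X, ∃ b ∈ B, G.ResReach c a b) :
    ¬ ∃ a ∈ A, ∃ b ∈ B, G.ResReach (fun d => c d - f d) a b :=
  stmt2_general G c f X A B hanti hcap hsrc h
end

section
/- (Sinks lemma) Let f be a feasible flow in G whose sink set is X (all conservation violations with positive inflow occur at nodes of X) and which respects the capacities of G. Let A and B be disjoint sets of nodes. If there is no residual path from A to B ∪ X in G, then there is no residual path from A to B in the residual graph G_f. -/
/-- sinks lemma. -/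
theorem stmt3 {V D : Type} [Fintype D] [DecidableEq V]
    (G : Dgraph V D) (c f : D → ℝ) (X A B : Set V)
    (hanti : G.Antisym f) (hcap : ∀ d, f d ≤ c d)
    (hsink : ∀ v, 0 < G.inflow f v → v ∈ X)
    (hAB : Disjoint A B)
    (h : ¬ ∃ a ∈ A, ∃ b ∈ B ∪ X, G.ResReach c a b) :
    ¬ ∃ a ∈ A, ∃ b ∈ B, G.ResReach (fun d => c d - f d) a b := by
  classical
  rintro ⟨a, haA, b, hbB, hreach⟩
  set S : Set V := {v | G.ResReach c a v} with hSdef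
  have haS : a ∈ S := Relation.ReflTransGen.refl
  have hSX : ∀ v ∈ S, v ∉ B ∪ X := fun v hv hvb => h ⟨a, haA, v, hvb, hv⟩
  -- darts leaving S have nonpositive capacity
  have hcle : ∀ d, G.tail d ∈ S → G.head d ∉ S → c d ≤ 0 := by
    intro d ht hh
    by_contra hc
    exact hh (Relation.ReflTransGen.tail ht ⟨d, rfl, rfl, lt_of_not_ge hc⟩)
  -- darts entering S from outside carry nonnegative flow
  have hf0 : ∀ d, G.head d ∈ S → G.tail d ∉ S → 0 ≤ f d := by
    intro d hh ht
    have h1 := hcap (G.rev d)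
    rw [hanti d] at h1
    have h2 := hcle (G.rev d) (by rwa [G.tail_rev]) (by rwa [G.head_rev])
    linarith
  -- the cut sums
  set T₂ : Finset D := Finset.univ.filter (fun d => G.head d ∈ S ∧ G.tail d ∉ S) with hT₂
  set Full : Finset D := Finset.univ.filter (fun d => G.head d ∈ S) with hFull
  -- sum over darts with both ends in S is 0 by antisymmetry
  have hsum1 : ∑ d ∈ Finset.univ.filter (fun d => G.head d ∈ S ∧ G.tail d ∈ S), f d = 0 := by
    apply Finset.sum_involution (fun d _ => G.rev d)
    · intro d _
      rw [hanti d]; ring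
    · intro d _ hfd hrev
      apply hfd
      have := hanti d
      rw [hrev] at this
      linarith
    · intro d hd
      simp only [Finset.mem_filter, Finset.mem_univ, true_and] at hd ⊢
      rw [G.head_rev, G.tail_rev]
      exact ⟨hd.2, hd.1⟩
    · intro d _
      exact G.rev_rev d
  -- sum over all darts entering S is ≤ 0 (no sinks in S)
  have hsum2 : ∑ d ∈ Full, f d ≤ 0 := by
    have hmaps : ∀ d ∈ Full, G.head d ∈
        (Finset.univ.image G.head).filter (fun v => v ∈ S) := by
      intro d hd
      simp only [hFull, Finset.mem_filter, Finset.mem_univ, true_and] at hd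
      simp only [Finset.mem_filter, Finset.mem_image]
      exact ⟨⟨d, Finset.mem_univ d, rfl⟩, hd⟩
    rw [← Finset.sum_fiberwise_of_maps_to hmaps]
    apply Finset.sum_nonpos
    intro v hv
    simp only [Finset.mem_filter, Finset.mem_image] at hv
    have hvS : v ∈ S := hv.2
    have hvX : v ∉ X := fun hx => hSX v hvS (Or.inr hx)
    have hinfl : G.inflow f v ≤ 0 := by
      by_contra hpos
      exact hvX (hsink v (lt_of_not_ge hpos))
    have heq : Full.filter (fun d => G.head d = v) =
        Finset.univ.filter (fun d => G.head d = v) := by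
      ext d
      simp only [hFull, Finset.mem_filter, Finset.mem_univ, true_and]
      constructor
      · rintro ⟨_, h2⟩; exact h2
      · intro h2; exact ⟨h2 ▸ hvS, h2⟩
    rw [heq]
    exact hinfl
  -- split Full into the two pieces
  have hsplit : ∑ d ∈ Full, f d =
      (∑ d ∈ Finset.univ.filter (fun d => G.head d ∈ S ∧ G.tail d ∈ S), f d) +
      ∑ d ∈ T₂, f d := by
    rw [hFull, hT₂, ← Finset.sum_filter_add_sum_filter_not
      (Finset.univ.filter (fun d => G.head d ∈ S)) (fun d => G.tail d ∈ S),
      Finset.filter_filter, Finset.filter_filter]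
  have hsumT₂ : ∑ d ∈ T₂, f d ≤ 0 := by
    rw [hsplit, hsum1, zero_add] at hsum2
    exact hsum2
  -- every dart in T₂ carries zero flow
  have hzero : ∀ d ∈ T₂, f d = 0 := by
    intro d hd
    have hmem := hd
    simp only [hT₂, Finset.mem_filter, Finset.mem_univ, true_and] at hmem
    have hge : 0 ≤ f d := hf0 d hmem.1 hmem.2
    have hle : f d ≤ ∑ e ∈ T₂, f e := by
      apply Finset.single_le_sum (fun e he => ?_) hd
      simp only [hT₂, Finset.mem_filter, Finset.mem_univ, true_and] at he
      exact hf0 e he.1 he.2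
    linarith
  -- the residual-reachable set from a is contained in S
  have hbS : b ∈ S := by
    clear hbB
    induction hreach with
    | refl => exact haS
    | tail _ hstep ih =>
      obtain ⟨d, hdt, hdh, hdc⟩ := hstep
      by_contra hv
      have hcd : c d ≤ 0 := hcle d (hdt ▸ ih) (hdh ▸ hv)
      have hfd : f d < 0 := by
        have := hcap d
        simp only at hdc
        linarith
      have hmem : G.rev d ∈ T₂ := by
        simp only [hT₂, Finset.mem_filter, Finset.mem_univ, true_and]
        rw [G.head_rev, G.tail_rev, hdt, hdh]
        exact ⟨ih, hv⟩
      have hz := hzero _ hmem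
      rw [hanti d] at hz
      linarith
  exact hSX b hbS (Or.inl hbB)
end

section
/- Let φ be a real-valued function on the faces of a planar embedded graph G (equivalently on the nodes of the dual G*). Define a flow assignment ρ on darts by ρ(d) = φ(head_{G*}(d)) - φ(tail_{G*}(d)), where head_{G*} and tail_{G*} are the faces on either side of d. Then ρ is a circulation: it satisfies antisymmetry and obeys conservation (inflow zero) at every node of G. -/
theorem finRotate_apply_eq_mod {n : ℕ} (i : Fin n) :
    finRotate n i = ⟨((i : ℕ) + 1) % n, Nat.mod_lt _ i.pos⟩ := by
  have := i.neZero
  ext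
  simp only [finRotate_apply, Fin.val_add, Fin.val_one', Nat.add_mod_mod]

theorem Fin.sum_sub_finRotate {M : Type*} [AddCommGroup M] {n : ℕ} (f : Fin n → M) :
    ∑ i, (f (finRotate n i) - f i) = 0 := by
  rw [Finset.sum_sub_distrib, Equiv.sum_comp, sub_self]

namespace Dgraph

variable {V D F : Type}

theorem antisym_dual_potential_diff (G : Dgraph V D) (Gd : Dgraph F D) (hrev : Gd.rev = G.rev)
    (φ : F → ℝ) : G.Antisym (fun d => φ (Gd.head d) - φ (Gd.tail d)) := by
  intro d
  simp only [← hrev, Gd.head_rev, Gd.tail_rev]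
  ring

theorem inflow_eq_sum_subtype [Fintype D] [DecidableEq V] (G : Dgraph V D) (f : D → ℝ) (v : V) :
    G.inflow f v = ∑ d : {d : D // G.head d = v}, f d :=
  Finset.sum_subtype _ (fun _ => by simp) _

/-- The darts entering `v`, listed in rotation order as `e`, trace a closed walk in the dual,
so the potential differences along them telescope. -/
theorem inflow_dual_potential_diff_eq_zero [Fintype D] [DecidableEq V]
    (G : Dgraph V D) (Gd : Dgraph F D) (φ : F → ℝ) {v : V} {n : ℕ}
    (e : Fin n ≃ {d : D // G.head d = v})
    (he : ∀ i, Gd.head (e i : D) = Gd.tail (e (finRotate n i) : D)) :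
    G.inflow (fun d => φ (Gd.head d) - φ (Gd.tail d)) v = 0 := by
  rw [inflow_eq_sum_subtype, ← e.sum_comp]
  simp only [he]
  exact Fin.sum_sub_finRotate fun i => φ (Gd.tail (e i : D))

end Dgraph

/-- a potential on the faces (nodes of the dual) induces a circulation. -/
theorem stmt9 {V D F : Type} [Fintype D] [DecidableEq V]
    (G : Dgraph V D) (Gd : Dgraph F D) (hrev : Gd.rev = G.rev)
    (hnode : ∀ v : V, ∃ (n : ℕ) (e : Fin n ≃ {d : D // G.head d = v}),
      ∀ i : Fin n,
        Gd.head ((e i : {d : D // G.head d = v}) : D)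
          = Gd.tail ((e ⟨((i : ℕ) + 1) % n, Nat.mod_lt _ i.pos⟩ : {d : D // G.head d = v}) : D))
    (φ : F → ℝ) :
    G.Antisym (fun d => φ (Gd.head d) - φ (Gd.tail d)) ∧
    (∀ v, G.inflow (fun d => φ (Gd.head d) - φ (Gd.tail d)) v = 0) := by
  refine ⟨G.antisym_dual_potential_diff Gd hrev φ, fun v => ?_⟩
  obtain ⟨n, e, he⟩ := hnode v
  refine G.inflow_dual_potential_diff_eq_zero Gd φ e fun i => ?_
  rw [he i, finRotate_apply_eq_mod]
end
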